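/- Let l be a finite-dimensional real Lie algebra, D a derivation of l with D³ = −D, and θ an involutive Lie algebra automorphism of l with D∘θ = −θ∘D. Write l₊ = ker(θ − id), l₋ = ker(θ + id), l⁺ = ker D, l⁻ = ker(D² + id). Assume dim(l₊ ∩ l⁻) ≤ 1 and [l⁻, l⁻] = l⁺ (span of brackets). Then one of the following holds: (1) l = 0; (2) l is 2-dimensional abelian with a basis X, Y such that θX = X, θY = −Y, DX = Y, DY = −X; (3) l is 3-dimensional with a basis X, Y, Z such that [X,Y] = Z, [X,Z] = 0, [Y,Z] = 0 (Heisenberg algebra), θX = X, θY = −Y, θZ = −Z, DX = Y, DY = −X, DZ = 0; (4) l has a basis H, X, Y with [H,X] = 2Y, [H,Y] = −2X, [X,Y] = 2H (so l ≅ su(2)), θH = H, θX = −X, θY = −Y, and D = (1/2)·ad(X); (5) l has a basis H, X, Y with [H,X] = 2Y, [H,Y] = 2X, [X,Y] = 2H (so l ≅ sl(2,ℝ)), θH = H, θX = −X, θY = −Y, and D = (1/2)·ad(X). -/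
import Mathlib


/-- The span of all brackets of elements of two submodules of a Lie algebra. -/
def bracketSpan {l : Type*} [LieRing l] [LieAlgebra ℝ l] (s t : Submodule ℝ l) :
    Submodule ℝ l :=
  Submodule.span ℝ {z | ∃ x ∈ s, ∃ y ∈ t, z = ⁅x, y⁆}

private lemma stmt5_aux_abelian {l : Type*} [LieRing l] [LieAlgebra ℝ l] [Module.Finite ℝ l]
    (θ D : l →ₗ[ℝ] l)
    (X Y : l) (hθX : θ X = X) (hθY : θ Y = -Y)
    (hY : Y = D X) (hDY : D Y = -X)
    (hind : ∀ s t : ℝ, s • X + t • Y = 0 → s = 0 ∧ t = 0)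
    (hdecomp : ∀ x : l, ∃ p q r : ℝ, x = p • X + q • Y + r • ⁅X, Y⁆)
    (hZ0 : ⁅X, Y⁆ = 0) :
    (∃ X Y : l, LinearIndependent ℝ ![X, Y] ∧
      Submodule.span ℝ {X, Y} = (⊤ : Submodule ℝ l) ∧
      (∀ a b : l, ⁅a, b⁆ = 0) ∧
      θ X = X ∧ θ Y = -Y ∧ D X = Y ∧ D Y = -X) := by
  refine ⟨X, Y, ?_, ?_, ?_, hθX, hθY, hY.symm, hDY⟩
  · rw [Fintype.linearIndependent_iff]
    intro g hg
    have hg' : g 0 • X + g 1 • Y = 0 := by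
      simpa [Fin.sum_univ_two] using hg
    obtain ⟨h0, h1⟩ := hind _ _ hg'
    intro i; fin_cases i <;> simpa
  · rw [eq_top_iff]
    rintro x -
    obtain ⟨p, q, r, rfl⟩ := hdecomp x
    rw [hZ0, smul_zero, add_zero]
    exact Submodule.add_mem _
      (Submodule.smul_mem _ _ (Submodule.subset_span (by simp)))
      (Submodule.smul_mem _ _ (Submodule.subset_span (by simp)))
  · intro u v
    obtain ⟨p, q, r, rfl⟩ := hdecomp u
    obtain ⟨p', q', r', rfl⟩ := hdecomp v
    have hYX : ⁅Y, X⁆ = 0 := by rw [← lie_skew, hZ0, neg_zero]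
    simp [hZ0, hYX, lie_add, add_lie, lie_smul, smul_lie, lie_self]

private lemma stmt5_aux_heis {l : Type*} [LieRing l] [LieAlgebra ℝ l] [Module.Finite ℝ l]
    (θ D : l →ₗ[ℝ] l)
    (X Y : l) (hθX : θ X = X) (hθY : θ Y = -Y) (hθZ : θ ⁅X, Y⁆ = -⁅X, Y⁆)
    (hY : Y = D X) (hDY : D Y = -X) (hDZ : D ⁅X, Y⁆ = 0)
    (hind3 : ⁅X, Y⁆ ≠ 0 → ∀ p q r : ℝ, p • X + q • Y + r • ⁅X, Y⁆ = 0 →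
      p = 0 ∧ q = 0 ∧ r = 0)
    (hdecomp : ∀ x : l, ∃ p q r : ℝ, x = p • X + q • Y + r • ⁅X, Y⁆)
    (hZ0 : ⁅X, Y⁆ ≠ 0)
    (hab : ⁅X, ⁅X, Y⁆⁆ = (0 : ℝ) • Y) (hYZ : ⁅Y, ⁅X, Y⁆⁆ = (-(0 : ℝ)) • X) :
    (∃ X Y Z : l, LinearIndependent ℝ ![X, Y, Z] ∧
      Submodule.span ℝ {X, Y, Z} = (⊤ : Submodule ℝ l) ∧
      ⁅X, Y⁆ = Z ∧ ⁅X, Z⁆ = 0 ∧ ⁅Y, Z⁆ = 0 ∧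
      θ X = X ∧ θ Y = -Y ∧ θ Z = -Z ∧
      D X = Y ∧ D Y = -X ∧ D Z = 0) := by
  refine ⟨X, Y, ⁅X, Y⁆, ?_, ?_, rfl, by simpa using hab, by simpa using hYZ,
    hθX, hθY, hθZ, hY.symm, hDY, hDZ⟩
  · rw [Fintype.linearIndependent_iff]
    intro g hg
    have hg' : g 0 • X + g 1 • Y + g 2 • ⁅X, Y⁆ = 0 := by
      simpa [Fin.sum_univ_three] using hg
    obtain ⟨h0, h1, h2⟩ := hind3 hZ0 _ _ _ hg'
    intro i; fin_cases i <;> simpa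
  · rw [eq_top_iff]
    rintro x -
    obtain ⟨p, q, r, rfl⟩ := hdecomp x
    refine Submodule.add_mem _ (Submodule.add_mem _ ?_ ?_) ?_ <;>
      exact Submodule.smul_mem _ _ (Submodule.subset_span (by simp))

private lemma stmt5_aux_su2 {l : Type*} [LieRing l] [LieAlgebra ℝ l] [Module.Finite ℝ l]
    (θ D : l →ₗ[ℝ] l) (b : ℝ)
    (X Y : l) (hθX : θ X = X) (hθY : θ Y = -Y) (hθZ : θ ⁅X, Y⁆ = -⁅X, Y⁆)
    (hY : Y = D X) (hDY : D Y = -X) (hDZ : D ⁅X, Y⁆ = 0)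
    (hind3 : ⁅X, Y⁆ ≠ 0 → ∀ p q r : ℝ, p • X + q • Y + r • ⁅X, Y⁆ = 0 →
      p = 0 ∧ q = 0 ∧ r = 0)
    (hdecomp : ∀ x : l, ∃ p q r : ℝ, x = p • X + q • Y + r • ⁅X, Y⁆)
    (hZ0 : ⁅X, Y⁆ ≠ 0)
    (hab : ⁅X, ⁅X, Y⁆⁆ = b • Y) (hYZ : ⁅Y, ⁅X, Y⁆⁆ = (-b) • X)
    (hb : b < 0) :
    (∃ H X Y : l, LinearIndependent ℝ ![H, X, Y] ∧
      Submodule.span ℝ {H, X, Y} = (⊤ : Submodule ℝ l) ∧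
      ⁅H, X⁆ = (2 : ℝ) • Y ∧ ⁅H, Y⁆ = -((2 : ℝ) • X) ∧ ⁅X, Y⁆ = (2 : ℝ) • H ∧
      θ H = H ∧ θ X = -X ∧ θ Y = -Y ∧
      (∀ w : l, D w = (1 / 2 : ℝ) • ⁅X, w⁆)) := by
  have hb0 : b ≠ 0 := ne_of_lt hb
  obtain ⟨s, hsdef⟩ : ∃ s : ℝ, s = Real.sqrt (-b) := ⟨_, rfl⟩
  have hspos : (0 : ℝ) < s := hsdef ▸ Real.sqrt_pos.2 (by linarith)
  have hs2 : s ^ 2 = -b := by rw [hsdef]; exact Real.sq_sqrt (by linarith)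
  have hs0 : s ≠ 0 := ne_of_gt hspos
  obtain ⟨α, hα⟩ : ∃ α : ℝ, α = 2 / s := ⟨_, rfl⟩
  obtain ⟨lam, hlam⟩ : ∃ lam : ℝ, lam = -2 / b := ⟨_, rfl⟩
  obtain ⟨β, hβ⟩ : ∃ β : ℝ, β = -α := ⟨_, rfl⟩
  have hα0 : α ≠ 0 := by rw [hα]; exact div_ne_zero two_ne_zero hs0
  have hβ0 : β ≠ 0 := by rw [hβ]; exact neg_ne_zero.2 hα0
  have hlam0 : lam ≠ 0 := by rw [hlam]; exact div_ne_zero (by norm_num) hb0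
  -- scalar identities
  have e1 : α * (lam * b) = 2 * β := by
    rw [hβ, hα, hlam]; field_simp
  have e2 : α * β = -(2 * lam) := by
    rw [hβ, hα, hlam]
    rw [show b = -(s ^ 2) by linarith]
    field_simp
  have e3 : lam * (β * b) = 2 * α := by
    rw [hβ, hα, hlam]; field_simp
  have e4 : lam * b = -2 := by rw [hlam]; field_simp
  -- bracket facts
  have hZX : ⁅⁅X, Y⁆, X⁆ = -(b • Y) := by rw [← lie_skew, hab]
  have hZY : ⁅⁅X, Y⁆, Y⁆ = b • X := by
    rw [← lie_skew, hYZ]; module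
  refine ⟨α • X, lam • ⁅X, Y⁆, β • Y, ?_, ?_, ?_, ?_, ?_, ?_, ?_, ?_, ?_⟩
  · -- linear independence
    rw [Fintype.linearIndependent_iff]
    intro g hg
    have hg' : (g 0 * α) • X + (g 2 * β) • Y + (g 1 * lam) • ⁅X, Y⁆ = 0 := by
      have := hg
      simp only [Fin.sum_univ_three, Matrix.cons_val_zero, Matrix.cons_val_one,
        Matrix.head_cons, Matrix.cons_val_two, Matrix.tail_cons] at this
      linear_combination (norm := module) this
    obtain ⟨h0, h2, h1⟩ := hind3 hZ0 _ _ _ hg'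
    intro i
    fin_cases i
    · simpa using (mul_eq_zero.1 h0).resolve_right hα0
    · simpa using (mul_eq_zero.1 h1).resolve_right hlam0
    · simpa using (mul_eq_zero.1 h2).resolve_right hβ0
  · -- span
    rw [eq_top_iff]
    rintro x -
    obtain ⟨p, q, r, rfl⟩ := hdecomp x
    have hXm : X ∈ Submodule.span ℝ {α • X, lam • ⁅X, Y⁆, β • Y} := by
      have h := Submodule.smul_mem (Submodule.span ℝ {α • X, lam • ⁅X, Y⁆, β • Y}) α⁻¹
        (Submodule.subset_span (show α • X ∈ _ by simp))
      rwa [smul_smul, inv_mul_cancel₀ hα0, one_smul] at h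
    have hYm : Y ∈ Submodule.span ℝ {α • X, lam • ⁅X, Y⁆, β • Y} := by
      have h := Submodule.smul_mem (Submodule.span ℝ {α • X, lam • ⁅X, Y⁆, β • Y}) β⁻¹
        (Submodule.subset_span (show β • Y ∈ _ by simp))
      rwa [smul_smul, inv_mul_cancel₀ hβ0, one_smul] at h
    have hZm : ⁅X, Y⁆ ∈ Submodule.span ℝ {α • X, lam • ⁅X, Y⁆, β • Y} := by
      have h := Submodule.smul_mem (Submodule.span ℝ {α • X, lam • ⁅X, Y⁆, β • Y}) lam⁻¹
        (Submodule.subset_span (show lam • ⁅X, Y⁆ ∈ _ by simp))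
      rwa [smul_smul, inv_mul_cancel₀ hlam0, one_smul] at h
    exact Submodule.add_mem _ (Submodule.add_mem _ (Submodule.smul_mem _ _ hXm)
      (Submodule.smul_mem _ _ hYm)) (Submodule.smul_mem _ _ hZm)
  · -- [H, X'] = 2 • Y'
    rw [smul_lie, lie_smul, hab]
    match_scalars
    linear_combination e1
  · -- [H, Y'] = -(2 • X')
    rw [smul_lie, lie_smul]
    match_scalars
    linear_combination e2
  · -- [X', Y'] = 2 • H
    rw [smul_lie, lie_smul, hZY]
    match_scalars
    linear_combination e3
  · rw [map_smul, hθX]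
  · rw [map_smul, hθZ]; module
  · rw [map_smul, hθY]; module
  · -- D = (1/2) ad(X')
    intro w
    obtain ⟨p, q, r, rfl⟩ := hdecomp w
    simp only [map_add, map_smul, lie_add, lie_smul, smul_lie]
    rw [← hY, hDY, hDZ, hZX, hZY, lie_self]
    match_scalars
    · linear_combination (p / 2) * e4
    · linear_combination (-q / 2) * e4

private lemma stmt5_aux_sl2 {l : Type*} [LieRing l] [LieAlgebra ℝ l] [Module.Finite ℝ l]
    (θ D : l →ₗ[ℝ] l) (b : ℝ)
    (X Y : l) (hθX : θ X = X) (hθY : θ Y = -Y) (hθZ : θ ⁅X, Y⁆ = -⁅X, Y⁆)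
    (hY : Y = D X) (hDY : D Y = -X) (hDZ : D ⁅X, Y⁆ = 0)
    (hind3 : ⁅X, Y⁆ ≠ 0 → ∀ p q r : ℝ, p • X + q • Y + r • ⁅X, Y⁆ = 0 →
      p = 0 ∧ q = 0 ∧ r = 0)
    (hdecomp : ∀ x : l, ∃ p q r : ℝ, x = p • X + q • Y + r • ⁅X, Y⁆)
    (hZ0 : ⁅X, Y⁆ ≠ 0)
    (hab : ⁅X, ⁅X, Y⁆⁆ = b • Y) (hYZ : ⁅Y, ⁅X, Y⁆⁆ = (-b) • X)
    (hb : 0 < b) :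
    (∃ H X Y : l, LinearIndependent ℝ ![H, X, Y] ∧
      Submodule.span ℝ {H, X, Y} = (⊤ : Submodule ℝ l) ∧
      ⁅H, X⁆ = (2 : ℝ) • Y ∧ ⁅H, Y⁆ = (2 : ℝ) • X ∧ ⁅X, Y⁆ = (2 : ℝ) • H ∧
      θ H = H ∧ θ X = -X ∧ θ Y = -Y ∧
      (∀ w : l, D w = (1 / 2 : ℝ) • ⁅X, w⁆)) := by
  have hb0 : b ≠ 0 := ne_of_gt hb
  obtain ⟨s, hsdef⟩ : ∃ s : ℝ, s = Real.sqrt b := ⟨_, rfl⟩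
  have hspos : (0 : ℝ) < s := hsdef ▸ Real.sqrt_pos.2 (by linarith)
  have hs2 : s ^ 2 = b := by rw [hsdef]; exact Real.sq_sqrt (by linarith)
  have hs0 : s ≠ 0 := ne_of_gt hspos
  obtain ⟨α, hα⟩ : ∃ α : ℝ, α = 2 / s := ⟨_, rfl⟩
  obtain ⟨lam, hlam⟩ : ∃ lam : ℝ, lam = -2 / b := ⟨_, rfl⟩
  obtain ⟨β, hβ⟩ : ∃ β : ℝ, β = -α := ⟨_, rfl⟩
  have hα0 : α ≠ 0 := by rw [hα]; exact div_ne_zero two_ne_zero hs0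
  have hβ0 : β ≠ 0 := by rw [hβ]; exact neg_ne_zero.2 hα0
  have hlam0 : lam ≠ 0 := by rw [hlam]; exact div_ne_zero (by norm_num) hb0
  -- scalar identities
  have e1 : α * (lam * b) = 2 * β := by
    rw [hβ, hα, hlam]; field_simp
  have e2 : α * β = 2 * lam := by
    rw [hβ, hα, hlam]
    rw [show b = s ^ 2 by linarith]
    field_simp
  have e3 : lam * (β * b) = 2 * α := by
    rw [hβ, hα, hlam]; field_simp
  have e4 : lam * b = -2 := by rw [hlam]; field_simp
  -- bracket facts
  have hZX : ⁅⁅X, Y⁆, X⁆ = -(b • Y) := by rw [← lie_skew, hab]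
  have hZY : ⁅⁅X, Y⁆, Y⁆ = b • X := by
    rw [← lie_skew, hYZ]; module
  refine ⟨α • X, lam • ⁅X, Y⁆, β • Y, ?_, ?_, ?_, ?_, ?_, ?_, ?_, ?_, ?_⟩
  · -- linear independence
    rw [Fintype.linearIndependent_iff]
    intro g hg
    have hg' : (g 0 * α) • X + (g 2 * β) • Y + (g 1 * lam) • ⁅X, Y⁆ = 0 := by
      have := hg
      simp only [Fin.sum_univ_three, Matrix.cons_val_zero, Matrix.cons_val_one,
        Matrix.head_cons, Matrix.cons_val_two, Matrix.tail_cons] at this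
      linear_combination (norm := module) this
    obtain ⟨h0, h2, h1⟩ := hind3 hZ0 _ _ _ hg'
    intro i
    fin_cases i
    · simpa using (mul_eq_zero.1 h0).resolve_right hα0
    · simpa using (mul_eq_zero.1 h1).resolve_right hlam0
    · simpa using (mul_eq_zero.1 h2).resolve_right hβ0
  · -- span
    rw [eq_top_iff]
    rintro x -
    obtain ⟨p, q, r, rfl⟩ := hdecomp x
    have hXm : X ∈ Submodule.span ℝ {α • X, lam • ⁅X, Y⁆, β • Y} := by
      have h := Submodule.smul_mem (Submodule.span ℝ {α • X, lam • ⁅X, Y⁆, β • Y}) α⁻¹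
        (Submodule.subset_span (show α • X ∈ _ by simp))
      rwa [smul_smul, inv_mul_cancel₀ hα0, one_smul] at h
    have hYm : Y ∈ Submodule.span ℝ {α • X, lam • ⁅X, Y⁆, β • Y} := by
      have h := Submodule.smul_mem (Submodule.span ℝ {α • X, lam • ⁅X, Y⁆, β • Y}) β⁻¹
        (Submodule.subset_span (show β • Y ∈ _ by simp))
      rwa [smul_smul, inv_mul_cancel₀ hβ0, one_smul] at h
    have hZm : ⁅X, Y⁆ ∈ Submodule.span ℝ {α • X, lam • ⁅X, Y⁆, β • Y} := by
      have h := Submodule.smul_mem (Submodule.span ℝ {α • X, lam • ⁅X, Y⁆, β • Y}) lam⁻¹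
        (Submodule.subset_span (show lam • ⁅X, Y⁆ ∈ _ by simp))
      rwa [smul_smul, inv_mul_cancel₀ hlam0, one_smul] at h
    exact Submodule.add_mem _ (Submodule.add_mem _ (Submodule.smul_mem _ _ hXm)
      (Submodule.smul_mem _ _ hYm)) (Submodule.smul_mem _ _ hZm)
  · -- [H, X'] = 2 • Y'
    rw [smul_lie, lie_smul, hab]
    match_scalars
    linear_combination e1
  · -- [H, Y'] = 2 • X'
    rw [smul_lie, lie_smul]
    match_scalars
    linear_combination e2
  · -- [X', Y'] = 2 • H
    rw [smul_lie, lie_smul, hZY]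
    match_scalars
    linear_combination e3
  · rw [map_smul, hθX]
  · rw [map_smul, hθZ]; module
  · rw [map_smul, hθY]; module
  · -- D = (1/2) ad(X')
    intro w
    obtain ⟨p, q, r, rfl⟩ := hdecomp w
    simp only [map_add, map_smul, lie_add, lie_smul, smul_lie]
    rw [← hY, hDY, hDZ, hZX, hZY, lie_self]
    match_scalars
    · linear_combination (p / 2) * e4
    · linear_combination (-q / 2) * e4


/-- Classification of the h-graded (ℝ,ℤ₂)-equivariant Lie algebras (l,D,θ) with
dim(l₊ ∩ l⁻) ≤ 1 and [l⁻,l⁻] = l⁺: l is 0, ℝ², the Heisenberg algebra, su(2) or sl(2,ℝ),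
with the indicated structure maps. -/
theorem stmt5 {l : Type*} [LieRing l] [LieAlgebra ℝ l] [Module.Finite ℝ l]
    (D : l →ₗ[ℝ] l)
    (hDder : ∀ x y : l, D ⁅x, y⁆ = ⁅D x, y⁆ + ⁅x, D y⁆)
    (hD3 : D ∘ₗ D ∘ₗ D = -D)
    (θ : l →ₗ[ℝ] l)
    (hθ2 : θ ∘ₗ θ = LinearMap.id)
    (hθlie : ∀ x y : l, θ ⁅x, y⁆ = ⁅θ x, θ y⁆)
    (hDθ : D ∘ₗ θ = -(θ ∘ₗ D))
    (hdim : Module.finrank ℝ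
      ↥(LinearMap.ker (θ - LinearMap.id) ⊓ LinearMap.ker (D ∘ₗ D + LinearMap.id)) ≤ 1)
    (hfull : bracketSpan (LinearMap.ker (D ∘ₗ D + LinearMap.id))
        (LinearMap.ker (D ∘ₗ D + LinearMap.id)) = LinearMap.ker D) :
    (∀ x : l, x = 0) ∨
    (∃ X Y : l, LinearIndependent ℝ ![X, Y] ∧
      Submodule.span ℝ {X, Y} = (⊤ : Submodule ℝ l) ∧
      (∀ a b : l, ⁅a, b⁆ = 0) ∧
      θ X = X ∧ θ Y = -Y ∧ D X = Y ∧ D Y = -X) ∨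
    (∃ X Y Z : l, LinearIndependent ℝ ![X, Y, Z] ∧
      Submodule.span ℝ {X, Y, Z} = (⊤ : Submodule ℝ l) ∧
      ⁅X, Y⁆ = Z ∧ ⁅X, Z⁆ = 0 ∧ ⁅Y, Z⁆ = 0 ∧
      θ X = X ∧ θ Y = -Y ∧ θ Z = -Z ∧
      D X = Y ∧ D Y = -X ∧ D Z = 0) ∨
    (∃ H X Y : l, LinearIndependent ℝ ![H, X, Y] ∧
      Submodule.span ℝ {H, X, Y} = (⊤ : Submodule ℝ l) ∧
      ⁅H, X⁆ = (2 : ℝ) • Y ∧ ⁅H, Y⁆ = -((2 : ℝ) • X) ∧ ⁅X, Y⁆ = (2 : ℝ) • H ∧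
      θ H = H ∧ θ X = -X ∧ θ Y = -Y ∧
      (∀ w : l, D w = (1 / 2 : ℝ) • ⁅X, w⁆)) ∨
    (∃ H X Y : l, LinearIndependent ℝ ![H, X, Y] ∧
      Submodule.span ℝ {H, X, Y} = (⊤ : Submodule ℝ l) ∧
      ⁅H, X⁆ = (2 : ℝ) • Y ∧ ⁅H, Y⁆ = (2 : ℝ) • X ∧ ⁅X, Y⁆ = (2 : ℝ) • H ∧
      θ H = H ∧ θ X = -X ∧ θ Y = -Y ∧
      (∀ w : l, D w = (1 / 2 : ℝ) • ⁅X, w⁆)) := by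
  classical
  have hD3' : ∀ x : l, D (D (D x)) = -(D x) := fun x => by
    simpa using LinearMap.congr_fun hD3 x
  have hθ2' : ∀ x : l, θ (θ x) = x := fun x => by
    simpa using LinearMap.congr_fun hθ2 x
  have hDθ' : ∀ x : l, D (θ x) = -(θ (D x)) := fun x => by
    simpa using LinearMap.congr_fun hDθ x
  have hmem_lm : ∀ x : l, x ∈ LinearMap.ker (D ∘ₗ D + LinearMap.id) ↔ D (D x) = -x := by
    intro x
    simp [LinearMap.mem_ker, eq_neg_iff_add_eq_zero]
  have hmem_lp : ∀ x : l, x ∈ LinearMap.ker (θ - LinearMap.id) ↔ θ x = x := by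
    intro x
    simp [LinearMap.mem_ker, sub_eq_zero]
  have hdecD : ∀ x : l, D (x + D (D x)) = 0 := fun x => by
    rw [map_add, hD3' x]; abel
  have hdeclm : ∀ x : l, D (D (-(D (D x)))) = -(-(D (D x))) := fun x => by
    rw [map_neg, map_neg, hD3' (D x)]
  have hθlm : ∀ x : l, D (D x) = -x → D (D (θ x)) = -(θ x) := fun x hx => by
    rw [hDθ' x, map_neg, hDθ' (D x), hx]
    simp
  by_cases hex : ∃ X : l, θ X = X ∧ D (D X) = -X ∧ X ≠ 0
  case neg =>
    left
    push_neg at hex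
    have hlm0 : ∀ x : l, D (D x) = -x → x = 0 := by
      intro x hx
      have hu1 : θ (x + θ x) = x + θ x := by rw [map_add, hθ2']; abel
      have hu2 : D (D (x + θ x)) = -(x + θ x) := by
        simp only [map_add]
        rw [hx, hθlm x hx]; abel
      have hu0 : x + θ x = 0 := hex _ hu1 hu2
      have hv1 : θ (x - θ x) = -(x - θ x) := by rw [map_sub, hθ2']; abel
      have hDv1 : θ (D (x - θ x)) = D (x - θ x) := by
        have h := hDθ' (x - θ x)
        rw [hv1, map_neg] at h
        have := neg_injective h
        rw [← this]
      have hDv2 : D (D (D (x - θ x))) = -(D (x - θ x)) := hD3' _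
      have hDv0 : D (x - θ x) = 0 := hex _ hDv1 hDv2
      have hv2 : D (D (x - θ x)) = -(x - θ x) := by
        simp only [map_sub]
        rw [hx, hθlm x hx]; abel
      have hv0 : x - θ x = 0 := by
        rw [← neg_neg (x - θ x), ← hv2, hDv0, map_zero, neg_zero]
      have : x + x = 0 := by
        have := congrArg₂ (· + ·) hu0 hv0
        simpa using by linear_combination (norm := abel) hu0 + hv0
      have h2 : (2 : ℝ) • x = 0 := by rw [two_smul]; exact this
      simpa using (smul_eq_zero.1 h2).resolve_left (by norm_num)
    have hker0 : ∀ w : l, D w = 0 → w = 0 := by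
      intro w hw
      have hwmem : w ∈ bracketSpan (LinearMap.ker (D ∘ₗ D + LinearMap.id))
          (LinearMap.ker (D ∘ₗ D + LinearMap.id)) := by
        rw [hfull]; exact hw
      have hle : bracketSpan (LinearMap.ker (D ∘ₗ D + LinearMap.id))
          (LinearMap.ker (D ∘ₗ D + LinearMap.id)) ≤ ⊥ := by
        apply Submodule.span_le.2
        rintro z ⟨a, ha, b, hb, rfl⟩
        have : a = 0 := hlm0 a ((hmem_lm a).1 ha)
        simp [this]
      simpa using hle hwmem
    intro x
    have h1 : x + D (D x) = 0 := hker0 _ (hdecD x)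
    have h2 : -(D (D x)) = 0 := hlm0 _ (hdeclm x)
    have h3 : D (D x) = 0 := by simpa using h2
    rw [h3, add_zero] at h1
    exact h1
  case pos =>
    obtain ⟨X, hθX, hX2, hX0⟩ := hex
    set Y := D X with hY
    have hDY : D Y = -X := hX2
    have hθY : θ Y = -Y := by
      have h := hDθ' X
      rw [hθX] at h
      rw [← hY] at h
      rw [← neg_eq_iff_eq_neg] at h
      exact h.symm
    have hDDX : D (D X) = -X := by rw [← hY]; exact hDY
    have hDDY : D (D Y) = -Y := by rw [hDY, map_neg, ← hY]
    have hY0 : Y ≠ 0 := by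
      intro h
      apply hX0
      have := hDY
      rw [h, map_zero] at this
      simpa using this.symm
    have hmul : ∀ u : l, θ u = u → D (D u) = -u → ∃ c : ℝ, u = c • X := by
      intro u hu1 hu2
      obtain ⟨v, hv⟩ := finrank_le_one_iff.1 hdim
      have hXp : X ∈ LinearMap.ker (θ - LinearMap.id) ⊓ LinearMap.ker (D ∘ₗ D + LinearMap.id) :=
        ⟨(hmem_lp X).2 hθX, (hmem_lm X).2 hX2⟩
      have hup : u ∈ LinearMap.ker (θ - LinearMap.id) ⊓ LinearMap.ker (D ∘ₗ D + LinearMap.id) :=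
        ⟨(hmem_lp u).2 hu1, (hmem_lm u).2 hu2⟩
      obtain ⟨c₀, hc₀⟩ := hv ⟨X, hXp⟩
      obtain ⟨c, hc⟩ := hv ⟨u, hup⟩
      have hc₀' : c₀ • (v : l) = X := congrArg Subtype.val hc₀
      have hc' : c • (v : l) = u := congrArg Subtype.val hc
      have hc₀0 : c₀ ≠ 0 := by
        rintro rfl
        apply hX0
        rw [← hc₀', zero_smul]
      refine ⟨c / c₀, ?_⟩
      rw [← hc', ← hc₀', smul_smul]
      congr 1
      field_simp
    have hlm_span : ∀ w : l, D (D w) = -w → ∃ a b : ℝ, w = a • X + b • Y := by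
      intro w hw
      have hu1 : θ (w + θ w) = w + θ w := by rw [map_add, hθ2']; abel
      have hu2 : D (D (w + θ w)) = -(w + θ w) := by
        simp only [map_add]; rw [hw, hθlm w hw]; abel
      obtain ⟨a, ha⟩ := hmul _ hu1 hu2
      have hv1 : θ (w - θ w) = -(w - θ w) := by rw [map_sub, hθ2']; abel
      have hDv1 : θ (D (w - θ w)) = D (w - θ w) := by
        have h := hDθ' (w - θ w)
        rw [hv1, map_neg] at h
        exact (neg_injective h).symm
      obtain ⟨c, hc⟩ := hmul _ hDv1 (hD3' _)
      have hv2 : D (D (w - θ w)) = -(w - θ w) := by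
        simp only [map_sub]; rw [hw, hθlm w hw]; abel
      have hv : w - θ w = -(c • Y) := by
        rw [← neg_neg (w - θ w), ← hv2, hc, map_smul]
      refine ⟨a / 2, -(c / 2), ?_⟩
      have h2w : w + w = a • X + -(c • Y) := by
        rw [← ha, ← hv]; abel
      have : (2 : ℝ) • w = (2 : ℝ) • ((a / 2) • X + (-(c / 2)) • Y) := by
        rw [two_smul]
        rw [h2w]
        module
      exact smul_right_injective l (by norm_num : (2:ℝ) ≠ 0) this
    have hDZ : D ⁅X, Y⁆ = 0 := by
      rw [hDder X Y, ← hY, hDY]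
      simp
    have hθZ : θ ⁅X, Y⁆ = -⁅X, Y⁆ := by
      rw [hθlie, hθX, hθY, lie_neg]
    have hkermul : ∀ w : l, D w = 0 → ∃ c : ℝ, w = c • ⁅X, Y⁆ := by
      intro w hw
      have hwmem : w ∈ bracketSpan (LinearMap.ker (D ∘ₗ D + LinearMap.id))
          (LinearMap.ker (D ∘ₗ D + LinearMap.id)) := by rw [hfull]; exact hw
      have hle : bracketSpan (LinearMap.ker (D ∘ₗ D + LinearMap.id))
          (LinearMap.ker (D ∘ₗ D + LinearMap.id)) ≤ Submodule.span ℝ {⁅X, Y⁆} := by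
        apply Submodule.span_le.2
        rintro z ⟨x, hx, y, hy, rfl⟩
        obtain ⟨a, b, rfl⟩ := hlm_span x ((hmem_lm x).1 hx)
        obtain ⟨c, d, rfl⟩ := hlm_span y ((hmem_lm y).1 hy)
        have hbr : ⁅a • X + b • Y, c • X + d • Y⁆ = (a * d - b * c) • ⁅X, Y⁆ := by
          simp only [add_lie, lie_add, smul_lie, lie_smul, lie_self, smul_zero,
            add_zero, zero_add, smul_smul]
          rw [← lie_skew Y X]
          module
        rw [hbr]
        exact Submodule.smul_mem _ _ (Submodule.mem_span_singleton_self _)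
      obtain ⟨c, hc⟩ := Submodule.mem_span_singleton.1 (hle hwmem)
      exact ⟨c, hc.symm⟩
    have hDXZ : D ⁅X, ⁅X, Y⁆⁆ = ⁅Y, ⁅X, Y⁆⁆ := by
      rw [hDder, hDZ, ← hY, lie_zero, add_zero]
    have hDYZ : D ⁅Y, ⁅X, Y⁆⁆ = -⁅X, ⁅X, Y⁆⁆ := by
      rw [hDder, hDZ, hDY, lie_zero, add_zero, neg_lie]
    have hXZlm : D (D ⁅X, ⁅X, Y⁆⁆) = -⁅X, ⁅X, Y⁆⁆ := by rw [hDXZ, hDYZ]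
    obtain ⟨a, b, hab⟩ := hlm_span ⁅X, ⁅X, Y⁆⁆ hXZlm
    have hind : ∀ s t : ℝ, s • X + t • Y = 0 → s = 0 ∧ t = 0 := by
      intro s t hst
      have h1 : θ (s • X + t • Y) = 0 := by rw [hst, map_zero]
      rw [map_add, map_smul, map_smul, hθX, hθY] at h1
      have h2 : (s + s) • X = 0 := by
        linear_combination (norm := module) hst + h1
      have hs : s = 0 := by
        rcases smul_eq_zero.1 h2 with h | h
        · linarith
        · exact absurd h hX0
      refine ⟨hs, ?_⟩
      rw [hs, zero_smul, zero_add] at hst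
      rcases smul_eq_zero.1 hst with h | h
      · exact h
      · exact absurd h hY0
    have ha0 : a = 0 := by
      have h3 : θ ⁅X, ⁅X, Y⁆⁆ = -⁅X, ⁅X, Y⁆⁆ := by rw [hθlie, hθX, hθZ, lie_neg]
      have h4 := congrArg θ hab
      rw [h3, hab, map_add, map_smul, map_smul, hθX, hθY] at h4
      have h5 : (a + a) • X = 0 := by
        linear_combination (norm := module) (-1 : ℝ) • h4
      rcases smul_eq_zero.1 h5 with h | h
      · linarith
      · exact absurd h hX0
    rw [ha0, zero_smul, zero_add] at hab
    have hYZ : ⁅Y, ⁅X, Y⁆⁆ = (-b) • X := by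
      rw [← hDXZ, hab, map_smul, hDY, smul_neg, neg_smul]
    have hind3 : ⁅X, Y⁆ ≠ 0 → ∀ p q r : ℝ, p • X + q • Y + r • ⁅X, Y⁆ = 0 →
        p = 0 ∧ q = 0 ∧ r = 0 := by
      intro hZ0 p q r hpqr
      have h1 : D (D (p • X + q • Y + r • ⁅X, Y⁆)) = 0 := by rw [hpqr, map_zero, map_zero]
      simp only [map_add, map_smul] at h1
      rw [hDDX, map_neg, ← hY, hDZ, map_zero] at h1
      have h2 : p • X + q • Y = 0 := by
        linear_combination (norm := module) (-1 : ℝ) • h1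
      obtain ⟨hp, hq⟩ := hind p q h2
      refine ⟨hp, hq, ?_⟩
      rw [hp, hq, zero_smul, zero_smul, zero_add, zero_add] at hpqr
      rcases smul_eq_zero.1 hpqr with h | h
      · exact h
      · exact absurd h hZ0
    have hdecomp : ∀ x : l, ∃ p q r : ℝ, x = p • X + q • Y + r • ⁅X, Y⁆ := by
      intro x
      obtain ⟨c, hc⟩ := hkermul (x + D (D x)) (hdecD x)
      obtain ⟨p, q, hpq⟩ := hlm_span (-(D (D x))) ((hmem_lm _).1 (by
        rw [hmem_lm]
        exact hdeclm x))
      exact ⟨p, q, c, by linear_combination (norm := module) hc + hpq⟩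
    by_cases hZ0 : ⁅X, Y⁆ = 0
    · right; left
      exact stmt5_aux_abelian θ D X Y hθX hθY hY hDY hind hdecomp hZ0
    · rcases lt_trichotomy b 0 with hb | hb | hb
      · right; right; right; left
        exact stmt5_aux_su2 θ D b X Y hθX hθY hθZ hY hDY hDZ hind3 hdecomp hZ0 hab hYZ hb
      · right; right; left
        subst hb
        exact stmt5_aux_heis θ D X Y hθX hθY hθZ hY hDY hDZ hind3 hdecomp hZ0 hab hYZ
      · right; right; right; right
        exact stmt5_aux_sl2 θ D b X Y hθX hθY hθZ hY hDY hDZ hind3 hdecomp hZ0 hab hYZ hb
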